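/- arXiv:1408.5391 — 2 statements merged into one kernel-verified Lean document; each statement's English description precedes it below -/
import Mathlib

section
/- For every integer n ≥ 1, the following identity holds in the polynomial ring ℤ[λ]: (1+λ)^{binomial(n,2)} = Σ_{α ∈ TS_n} λ^{E(α)} ∏_{i=1}^{n−1} ∏_{k=1}^{n} binomial(C_{i+1,k}(α), E_{i,k}(α)), where the sum is over all TSSCPP arrays α of order n. -/
open scoped Classical

/-- A TSSCPP array of order `n`: rows `i = 1,…,n`, row `i` having columns
`j = 0,…,n-i`, with `α i 0 = i`, `i ≤ α i j ≤ i+j`, weakly increasing rows, and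
`α (i+1) (j-1) - 1 ≤ α i j ≤ α (i+1) (j-1)` for `j ≥ 1`. Entries outside the
staircase domain are normalized to `0`. -/
def IsTSarr (n : ℕ) (α : ℕ → ℕ → ℕ) : Prop :=
  (∀ i j, ¬(1 ≤ i ∧ i ≤ n ∧ j ≤ n - i) → α i j = 0) ∧
  (∀ i, 1 ≤ i → i ≤ n → α i 0 = i) ∧
  (∀ i j, 1 ≤ i → i ≤ n → j ≤ n - i → i ≤ α i j ∧ α i j ≤ i + j) ∧
  (∀ i j, 1 ≤ i → i ≤ n → j + 1 ≤ n - i → α i j ≤ α i (j + 1)) ∧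
  (∀ i j, 1 ≤ i → i + 1 ≤ n → 1 ≤ j → j ≤ n - i →
    α (i + 1) (j - 1) - 1 ≤ α i j ∧ α i j ≤ α (i + 1) (j - 1))

/-- `E_{i,k}(α)`: the number of entries of value `k` in row `i` (with `j ≥ 1`)
equal to their southwest diagonal neighbor. -/
def Eik (n : ℕ) (α : ℕ → ℕ → ℕ) (i k : ℕ) : ℕ :=
  ((Finset.Icc 1 n).filter
    (fun j => j ≤ n - i ∧ α i j = k ∧ α i j = α (i + 1) (j - 1))).card

/-- `E(α) = Σ_{i,k} E_{i,k}(α)`: the total number of entries equal to their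
southwest diagonal neighbor. -/
def Etot (n : ℕ) (α : ℕ → ℕ → ℕ) : ℕ :=
  ∑ i ∈ Finset.Icc 1 n, ∑ k ∈ Finset.Icc 1 n, Eik n α i k

/-- `C_{i,k}(α)`: the number of entries of value `k` in row `i` (column 0
included). -/
def Cik (n : ℕ) (α : ℕ → ℕ → ℕ) (i k : ℕ) : ℕ :=
  ((Finset.range (n + 1)).filter (fun j => j ≤ n - i ∧ α i j = k)).card

/-! ### Auxiliary development -/

namespace TSaux

open Finset Polynomial

/-- bound on entries of a TSSCPP array -/
lemma entry_le {n : ℕ} {α : ℕ → ℕ → ℕ} (h : IsTSarr n α) (i j : ℕ) : α i j ≤ n := by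
  by_cases hr : 1 ≤ i ∧ i ≤ n ∧ j ≤ n - i
  · have := (h.2.2.1 i j hr.1 hr.2.1 hr.2.2).2
    omega
  · rw [h.1 i j hr]; omega

/-- TSSCPP arrays of a given order form a finite set. -/
lemma ts_finite (n : ℕ) : {α : ℕ → ℕ → ℕ | IsTSarr n α}.Finite := by
  classical
  have : {α : ℕ → ℕ → ℕ | IsTSarr n α} ⊆
      Set.range (fun (g : Fin (n+1) → Fin (n+1) → Fin (n+1)) =>
        (fun i j => if h : i < n + 1 ∧ j < n + 1 then (g ⟨i, h.1⟩ ⟨j, h.2⟩ : ℕ) else 0)) := by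
    intro α hα
    refine ⟨fun a b => ⟨α a.1 b.1, Nat.lt_succ_of_le (entry_le hα _ _)⟩, ?_⟩
    funext i j
    by_cases h : i < n + 1 ∧ j < n + 1
    · simp [h]
    · simp only [h, dif_neg, not_false_iff]
      refine (hα.1 i j ?_).symm
      omega
  exact Set.Finite.subset (Set.finite_range _) this

/-- Rows of a TSSCPP array are weakly increasing. -/
lemma row_mono {n : ℕ} {α : ℕ → ℕ → ℕ} (h : IsTSarr n α) {i : ℕ} (h1 : 1 ≤ i) (h2 : i ≤ n)
    {j j' : ℕ} (hjj : j ≤ j') (hj' : j' ≤ n - i) : α i j ≤ α i j' := by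
  induction j' with
  | zero => simp_all
  | succ j'' ih =>
    rcases Nat.eq_or_lt_of_le hjj with heq | hlt
    · rw [heq]
    · exact le_trans (ih (by omega) (by omega)) (h.2.2.2.1 i j'' h1 h2 hj')

/-- Binomial theorem in the form we need. -/
lemma binom_sum (c : ℕ) :
    ∑ b ∈ Finset.Iic c, (Nat.choose c b : Polynomial ℤ) * Polynomial.X ^ b
      = (1 + Polynomial.X) ^ c := by
  have h : Finset.Iic c = Finset.range (c + 1) := by ext x; simp [Nat.lt_succ_iff]
  rw [h, add_comm (1 : Polynomial ℤ), add_pow]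
  refine Finset.sum_congr rfl fun b hb => ?_
  ring

section Step

variable (m : ℕ) (β : ℕ → ℕ → ℕ)

/-- row 2 of the extended array, as a function of the column of row 1 of `β`. -/
def s (j : ℕ) : ℕ := β 1 j + 1

/-- block of positions `j ∈ [1,m]` in row 1 of the big array whose SW neighbor has value `k`. -/
def blk (k : ℕ) : Finset ℕ := (Finset.Icc 1 m).filter (fun j => s β (j-1) = k)

/-- size of a block. -/
def c (k : ℕ) : ℕ := (blk m β k).card

/-- rank of position `j` from the end of its block. -/
def R (j : ℕ) : ℕ := ((Finset.Icc j m).filter (fun j' => s β (j'-1) = s β (j-1))).card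

/-- the top row determined by the choice vector `e`. -/
def re (e : ℕ → ℕ) (j : ℕ) : ℕ :=
  if R m β j ≤ e (s β (j-1)) then s β (j-1) else s β (j-1) - 1

/-- the big array glued from `β` and the choice vector `e`. -/
def glue (e : ℕ → ℕ) : ℕ → ℕ → ℕ := fun i j =>
  if i = 1 ∧ j ≤ m then (if j = 0 then 1 else re m β e j)
  else if 2 ≤ i ∧ i ≤ m + 1 ∧ j ≤ m + 1 - i then β (i-1) j + 1 else 0

/-- the shift-down map. -/
def shiftM (α : ℕ → ℕ → ℕ) : ℕ → ℕ → ℕ := fun i j =>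
  if 1 ≤ i ∧ i ≤ m ∧ j ≤ m - i then α (i+1) j - 1 else 0

lemma mem_blk {k j : ℕ} : j ∈ blk m β k ↔ (1 ≤ j ∧ j ≤ m ∧ s β (j-1) = k) := by
  simp [blk, Finset.mem_Icc, and_assoc]

lemma R_pos {j : ℕ} (hj1 : 1 ≤ j) (hj2 : j ≤ m) : 1 ≤ R m β j := by
  refine Finset.card_pos.mpr ⟨j, ?_⟩
  simp [Finset.mem_Icc, hj2]

lemma R_le_c {j : ℕ} (hj1 : 1 ≤ j) : R m β j ≤ c m β (s β (j-1)) := by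
  refine Finset.card_le_card (fun x hx => ?_)
  rw [Finset.mem_filter, Finset.mem_Icc] at hx
  exact (mem_blk m β).mpr ⟨by omega, hx.1.2, hx.2⟩

lemma R_lt {k j j' : ℕ} (hj : j ∈ blk m β k) (hj' : j' ∈ blk m β k) (hlt : j < j') :
    R m β j' < R m β j := by
  obtain ⟨hj1, hj2, hjk⟩ := (mem_blk m β).mp hj
  obtain ⟨hj1', hj2', hjk'⟩ := (mem_blk m β).mp hj'
  apply Finset.card_lt_card
  rw [Finset.ssubset_iff_of_subset]
  · refine ⟨j, ?_, ?_⟩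
    · rw [Finset.mem_filter, Finset.mem_Icc]; exact ⟨⟨le_rfl, hj2⟩, rfl⟩
    · rw [Finset.mem_filter, Finset.mem_Icc]; push_neg; intro h; omega
  · intro x hx
    rw [Finset.mem_filter, Finset.mem_Icc] at hx ⊢
    refine ⟨⟨by omega, hx.1.2⟩, by rw [hx.2, hjk', hjk]⟩

lemma R_succ {j : ℕ} (hj1 : 1 ≤ j) (hj2 : j + 1 ≤ m) (hs : s β (j-1) = s β j) :
    R m β j = R m β (j+1) + 1 := by
  have hIcc : Finset.Icc j m = insert j (Finset.Icc (j+1) m) := by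
    ext x; simp [Finset.mem_Icc]; omega
  have hps : (Finset.Icc (j+1) m).filter (fun j' => s β (j'-1) = s β (j-1))
      = (Finset.Icc (j+1) m).filter (fun j' => s β (j'-1) = s β ((j+1)-1)) := by
    apply Finset.filter_congr
    intro x _
    simp only [Nat.add_sub_cancel, hs]
  unfold R
  rw [hIcc, Finset.filter_insert, if_pos rfl, Finset.card_insert_of_notMem, hps]
  intro hmem
  rw [Finset.mem_filter, Finset.mem_Icc] at hmem
  omega

lemma R_injOn (k : ℕ) : Set.InjOn (R m β) (blk m β k) := by
  intro x hx y hy hxy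
  have hx' : x ∈ blk m β k := hx
  have hy' : y ∈ blk m β k := hy
  rcases lt_trichotomy x y with h | h | h
  · have := R_lt m β hx' hy' h; omega
  · exact h
  · have := R_lt m β hy' hx' h; omega

lemma R_image (k : ℕ) : (blk m β k).image (R m β) = Finset.Icc 1 (c m β k) := by
  refine (Finset.eq_of_subset_of_card_le (fun x hx => ?_) ?_).symm.symm
  · rw [Finset.mem_image] at hx
    obtain ⟨j, hj, rfl⟩ := hx
    obtain ⟨hj1, hj2, hjk⟩ := (mem_blk m β).mp hj
    rw [Finset.mem_Icc]
    refine ⟨R_pos m β hj1 hj2, ?_⟩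
    have := R_le_c m β (j := j) hj1
    rw [hjk] at this
    exact this
  · rw [Finset.card_image_of_injOn (R_injOn m β k), Nat.card_Icc]
    unfold c
    omega

lemma count_R_le (k e' : ℕ) :
    ((blk m β k).filter (fun j => R m β j ≤ e')).card = min e' (c m β k) := by
  have hinj : Set.InjOn (R m β) ((blk m β k).filter (fun j => R m β j ≤ e')) :=
    (R_injOn m β k).mono (by exact_mod_cast Finset.filter_subset _ _)
  have himg : ((blk m β k).filter (fun j => R m β j ≤ e')).image (R m β)
      = (Finset.Icc 1 (c m β k)).filter (fun v => v ≤ e') := by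
    rw [← R_image m β k, Finset.filter_image]
  have := Finset.card_image_of_injOn hinj
  rw [himg] at this
  rw [← this]
  have : (Finset.Icc 1 (c m β k)).filter (fun v => v ≤ e') = Finset.Icc 1 (min e' (c m β k)) := by
    ext x; simp [Finset.mem_Icc]; omega
  rw [this, Nat.card_Icc]
  omega

variable (hm : 1 ≤ m) (hβ : IsTSarr m β)

section WithHyp
include hm hβ

lemma s_bounds {j : ℕ} (hj : j ≤ m - 1) : 2 ≤ s β j ∧ s β j ≤ j + 2 := by
  have := hβ.2.2.1 1 j le_rfl hm hj
  unfold s; omega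

lemma s_mono {j j' : ℕ} (hjj : j ≤ j') (hj' : j' ≤ m - 1) : s β j ≤ s β j' := by
  have := row_mono hβ le_rfl hm hjj hj'
  unfold s; omega

lemma sum_c : ∑ k ∈ Finset.Icc 1 (m+1), c m β k = m := by
  have h : (Finset.Icc 1 m).card = ∑ k ∈ Finset.Icc 1 (m+1),
      ((Finset.Icc 1 m).filter (fun j => s β (j-1) = k)).card := by
    refine Finset.card_eq_sum_card_fiberwise (fun j hj => ?_)
    rw [Finset.mem_coe, Finset.mem_Icc] at hj
    have hb := s_bounds m β hm hβ (j := j - 1) (by omega)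
    rw [Finset.mem_coe, Finset.mem_Icc]
    omega
  simp only [Nat.card_Icc] at h
  unfold c blk
  omega

omit hm hβ in
lemma shift_mem {α : ℕ → ℕ → ℕ} (hα : IsTSarr (m+1) α) : IsTSarr m (shiftM m α) := by
  obtain ⟨h0, h1, h2, h3, h4⟩ := hα
  refine ⟨?_, ?_, ?_, ?_, ?_⟩
  · intro i j hr; simp only [shiftM, if_neg hr]
  · intro i hi1 hi2
    have hreg : 1 ≤ i ∧ i ≤ m ∧ 0 ≤ m - i := ⟨hi1, hi2, Nat.zero_le _⟩
    simp only [shiftM, if_pos hreg]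
    rw [h1 (i+1) (by omega) (by omega)]
    omega
  · intro i j hi1 hi2 hj
    simp only [shiftM, if_pos (⟨hi1, hi2, hj⟩ : 1 ≤ i ∧ i ≤ m ∧ j ≤ m - i)]
    have := h2 (i+1) j (by omega) (by omega) (by omega)
    omega
  · intro i j hi1 hi2 hj
    simp only [shiftM, if_pos (⟨hi1, hi2, by omega⟩ : 1 ≤ i ∧ i ≤ m ∧ j ≤ m - i),
      if_pos (⟨hi1, hi2, hj⟩ : 1 ≤ i ∧ i ≤ m ∧ j + 1 ≤ m - i)]
    have h2' := h2 (i+1) j (by omega) (by omega) (by omega)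
    have := h3 (i+1) j (by omega) (by omega) (by omega)
    omega
  · intro i j hi1 hi2 hj1 hj2
    simp only [shiftM, if_pos (⟨hi1, by omega, by omega⟩ : 1 ≤ i ∧ i ≤ m ∧ j ≤ m - i),
      if_pos (⟨by omega, by omega, by omega⟩ : 1 ≤ i + 1 ∧ i + 1 ≤ m ∧ j - 1 ≤ m - (i+1))]
    have hd := h4 (i+1) j (by omega) (by omega) hj1 (by omega)
    have hb1 := h2 (i+1) j (by omega) (by omega) (by omega)
    have hb2 := h2 (i+2) (j-1) (by omega) (by omega) (by omega)
    omega

omit hm hβ in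
lemma glue_top0 (e : ℕ → ℕ) : glue m β e 1 0 = 1 := by
  unfold glue
  rw [if_pos ⟨rfl, Nat.zero_le m⟩, if_pos rfl]

omit hm hβ in
lemma glue_one {e : ℕ → ℕ} {j : ℕ} (hj : j ≤ m) (hj1 : 1 ≤ j) : glue m β e 1 j = re m β e j := by
  unfold glue
  rw [if_pos ⟨rfl, hj⟩, if_neg (by omega)]

omit hm hβ in
lemma glue_lower {e : ℕ → ℕ} {i j : ℕ} (hi : 2 ≤ i) (hi2 : i ≤ m + 1) (hj : j ≤ m + 1 - i) :
    glue m β e i j = β (i-1) j + 1 := by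
  unfold glue
  rw [if_neg (by omega), if_pos ⟨hi, hi2, hj⟩]

lemma glue_isTS (e : ℕ → ℕ) : IsTSarr (m+1) (glue m β e) := by
  refine ⟨?_, ?_, ?_, ?_, ?_⟩
  · intro i j hr
    unfold glue
    rw [if_neg (by omega), if_neg (by omega)]
  · intro i h1 h2
    by_cases hi : i = 1
    · subst hi; exact glue_top0 m β e
    · rw [glue_lower m β (by omega) (by omega) (by omega),
        hβ.2.1 (i-1) (by omega) (by omega)]
      omega
  · intro i j h1 h2 hj
    by_cases hi : i = 1
    · subst hi
      by_cases hj0 : j = 0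
      · subst hj0; rw [glue_top0 m β e]; omega
      · rw [glue_one m β (by omega) (by omega)]
        have hb := s_bounds m β hm hβ (j := j-1) (by omega)
        unfold re
        split <;> omega
    · rw [glue_lower m β (by omega) (by omega) (by omega)]
      have := hβ.2.2.1 (i-1) j (by omega) (by omega) (by omega)
      omega
  · intro i j h1 h2 hj
    by_cases hi : i = 1
    · subst hi
      by_cases hj0 : j = 0
      · rw [hj0, glue_top0 m β e, glue_one m β (by omega) (by omega)]
        have hb := s_bounds m β hm hβ (j := 0) (by omega)
        unfold re
        split <;> simp <;> omega
      · rw [glue_one m β (by omega) (by omega), glue_one m β (by omega) (by omega)]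
        have hKK' : s β (j-1) ≤ s β j := s_mono m β hm hβ (by omega) (by omega)
        have hb := s_bounds m β hm hβ (j := j-1) (by omega)
        rcases eq_or_lt_of_le hKK' with heq | hlt
        · have hR := R_succ m β (by omega) (by omega) heq
          unfold re
          simp only [Nat.add_sub_cancel]
          rw [← heq, hR]
          split <;> split <;> omega
        · unfold re
          simp only [Nat.add_sub_cancel]
          split <;> split <;> omega
    · rw [glue_lower m β (by omega) (by omega) (by omega),
        glue_lower m β (by omega) (by omega) (by omega)]
      have := hβ.2.2.2.1 (i-1) j (by omega) (by omega) (by omega)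
      omega
  · intro i j h1 h2 hj1 hj2
    by_cases hi : i = 1
    · subst hi
      rw [glue_one m β (by omega) (by omega),
        glue_lower m β (by omega) (by omega) (by omega)]
      show _ ∧ re m β e j ≤ β (2-1) (j-1) + 1
      have hb := s_bounds m β hm hβ (j := j-1) (by omega)
      have hs : β (2-1) (j-1) + 1 = s β (j-1) := rfl
      rw [hs]
      unfold re
      split <;> omega
    · rw [glue_lower m β (by omega) (by omega) (by omega),
        glue_lower m β (by omega) (by omega) (by omega)]
      have := hβ.2.2.2.2 (i-1) j (by omega) (by omega) hj1 (by omega)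
      have hb1 := hβ.2.2.1 (i-1) j (by omega) (by omega) (by omega)
      have hb2 := hβ.2.2.1 i (j-1) (by omega) (by omega) (by omega)
      have hii : i - 1 + 1 = i := by omega
      rw [hii] at this
      simp only [Nat.add_sub_cancel]
      omega

lemma shift_glue (e : ℕ → ℕ) : shiftM m (glue m β e) = β := by
  funext i j
  unfold shiftM
  by_cases hr : 1 ≤ i ∧ i ≤ m ∧ j ≤ m - i
  · rw [if_pos hr, glue_lower m β (by omega) (by omega) (by omega)]
    simp
  · rw [if_neg hr]
    exact (hβ.1 i j hr).symm

lemma Eik_glue (e : ℕ → ℕ) (k : ℕ) :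
    Eik (m+1) (glue m β e) 1 k = min (e k) (c m β k) := by
  rw [← count_R_le m β k (e k)]
  have key : ∀ j, 1 ≤ j → j ≤ m →
      ((glue m β e 1 j = k ∧ glue m β e 1 j = glue m β e 2 (j-1))
        ↔ (s β (j-1) = k ∧ R m β j ≤ e k)) := by
    intro j h1 h2
    rw [glue_one m β h2 h1, glue_lower m β (by omega) (by omega) (by omega)]
    have hb := s_bounds m β hm hβ (j := j-1) (by omega)
    have hs : β (2-1) (j-1) + 1 = s β (j-1) := rfl
    rw [hs]
    by_cases hc : R m β j ≤ e (s β (j-1))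
    · unfold re
      rw [if_pos hc]
      constructor
      · rintro ⟨h1', _⟩; exact ⟨h1', by rwa [h1'] at hc⟩
      · rintro ⟨h1', _⟩; exact ⟨h1', rfl⟩
    · unfold re
      rw [if_neg hc]
      constructor
      · rintro ⟨_, h2'⟩; omega
      · rintro ⟨h1', h2'⟩; exact absurd h2' (by rwa [h1'] at hc)
  unfold Eik
  apply congrArg Finset.card
  ext j
  constructor
  · intro hmem
    rw [Finset.mem_filter, Finset.mem_Icc] at hmem
    obtain ⟨⟨hj1, _⟩, hjm, hcond⟩ := hmem
    have hjm' : j ≤ m := by omega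
    have h := (key j hj1 hjm').mp hcond
    rw [Finset.mem_filter]
    exact ⟨(mem_blk m β).mpr ⟨hj1, hjm', h.1⟩, h.2⟩
  · intro hmem
    rw [Finset.mem_filter] at hmem
    obtain ⟨hb, hR⟩ := hmem
    obtain ⟨hj1, hjm, hsk⟩ := (mem_blk m β).mp hb
    rw [Finset.mem_filter, Finset.mem_Icc]
    exact ⟨⟨hj1, by omega⟩, by omega, (key j hj1 hjm).mpr ⟨hsk, hR⟩⟩

lemma glue_congr {e e' : ℕ → ℕ} (h : ∀ k, 1 ≤ k → k ≤ m + 1 → e k = e' k) :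
    glue m β e = glue m β e' := by
  funext i j
  unfold glue re
  by_cases hc : i = 1 ∧ j ≤ m
  · rw [if_pos hc, if_pos hc]
    by_cases hj0 : j = 0
    · rw [if_pos hj0, if_pos hj0]
    · rw [if_neg hj0, if_neg hj0]
      have hb := s_bounds m β hm hβ (j := j-1) (by omega)
      rw [h (s β (j-1)) (by omega) (by omega)]
  · rw [if_neg hc, if_neg hc]

lemma fiber_rel {α : ℕ → ℕ → ℕ} (hα : IsTSarr (m+1) α) (hsh : shiftM m α = β)
    {i j : ℕ} (h1 : 1 ≤ i) (h2 : i ≤ m) (hj : j ≤ m - i) :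
    α (i+1) j = β i j + 1 := by
  have h := congrFun (congrFun hsh i) j
  unfold shiftM at h
  rw [if_pos ⟨h1, h2, hj⟩] at h
  have := (hα.2.2.1 (i+1) j (by omega) (by omega) (by omega)).1
  omega

lemma fiber_row2 {α : ℕ → ℕ → ℕ} (hα : IsTSarr (m+1) α) (hsh : shiftM m α = β)
    {j : ℕ} (hj : j ≤ m - 1) : α 2 j = s β j :=
  fiber_rel m β hm hβ hα hsh le_rfl hm hj

lemma fiber_EikQ {α : ℕ → ℕ → ℕ} (hα : IsTSarr (m+1) α) (hsh : shiftM m α = β) (k : ℕ) :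
    Eik (m+1) α 1 k = ((blk m β k).filter (fun x => α 1 x = k)).card := by
  unfold Eik
  apply congrArg Finset.card
  ext x
  constructor
  · intro hx
    rw [Finset.mem_filter, Finset.mem_Icc] at hx
    obtain ⟨⟨h1x, _⟩, hxm, hv, heq⟩ := hx
    have heq' : α 1 x = α 2 (x-1) := heq
    have hxm' : x ≤ m := by omega
    have hr2 : α 2 (x-1) = s β (x-1) := fiber_row2 m β hm hβ hα hsh (by omega)
    rw [Finset.mem_filter]
    exact ⟨(mem_blk m β).mpr ⟨h1x, hxm', by omega⟩, hv⟩
  · intro hx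
    rw [Finset.mem_filter] at hx
    obtain ⟨hbk, hv⟩ := hx
    obtain ⟨h1x, hxm, hs⟩ := (mem_blk m β).mp hbk
    rw [Finset.mem_filter, Finset.mem_Icc]
    have hr2 : α 2 (x-1) = s β (x-1) := fiber_row2 m β hm hβ hα hsh (by omega)
    refine ⟨⟨h1x, by omega⟩, by omega, hv, ?_⟩
    show α 1 x = α 2 (x-1)
    omega

lemma fiber_propagate {α : ℕ → ℕ → ℕ} (hα : IsTSarr (m+1) α) (hsh : shiftM m α = β)
    {j k : ℕ} (hj1 : 1 ≤ j) (hj2 : j ≤ m) (hsj : s β (j-1) = k) (hval : α 1 j = k) :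
    ∀ j', j ≤ j' → j' ≤ m → s β (j'-1) = k → α 1 j' = k := by
  intro j' hle
  induction j', hle using Nat.le_induction with
  | base => intro _ _; exact hval
  | succ x hx ih =>
    intro hxm hsx
    simp only [Nat.add_sub_cancel] at hsx
    have hsxm : s β (x-1) = k := by
      have h1 := s_mono m β hm hβ (show j-1 ≤ x-1 by omega) (show x-1 ≤ m-1 by omega)
      have h2 := s_mono m β hm hβ (show x-1 ≤ x by omega) (show x ≤ m-1 by omega)
      omega
    have hax := ih (by omega) hsxm
    have h3 := hα.2.2.2.1 1 x le_rfl (by omega) (by omega)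
    have h4 : α 1 (x+1) ≤ α 2 x :=
      (hα.2.2.2.2 1 (x+1) le_rfl (by omega) (by omega) (by omega)).2
    have h5 : α 2 x = s β x := fiber_row2 m β hm hβ hα hsh (by omega)
    omega

lemma fiber_top {α : ℕ → ℕ → ℕ} (hα : IsTSarr (m+1) α) (hsh : shiftM m α = β)
    {j : ℕ} (hj1 : 1 ≤ j) (hj2 : j ≤ m) :
    α 1 j = re m β (fun k => Eik (m+1) α 1 k) j := by
  have hb := s_bounds m β hm hβ (j := j-1) (by omega)
  have hd2 : s β (j-1) - 1 ≤ α 1 j ∧ α 1 j ≤ s β (j-1) := by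
    have h := hα.2.2.2.2 1 j le_rfl (by omega) hj1 (by omega)
    have hh1 : α 2 (j-1) - 1 ≤ α 1 j := h.1
    have hh2 : α 1 j ≤ α 2 (j-1) := h.2
    have hrow2 : α 2 (j-1) = s β (j-1) := fiber_row2 m β hm hβ hα hsh (by omega)
    omega
  have hEQ := fiber_EikQ m β hm hβ hα hsh (s β (j-1))
  unfold re
  by_cases hc : α 1 j = s β (j-1)
  · rw [if_pos ?_]
    · exact hc
    · show R m β j ≤ Eik (m+1) α 1 (s β (j-1))
      rw [hEQ]
      apply Finset.card_le_card
      intro x hx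
      rw [Finset.mem_filter, Finset.mem_Icc] at hx
      rw [Finset.mem_filter]
      have hval := fiber_propagate m β hm hβ hα hsh hj1 hj2 rfl hc x hx.1.1 hx.1.2 hx.2
      exact ⟨(mem_blk m β).mpr ⟨by omega, hx.1.2, hx.2⟩, hval⟩
  · rw [if_neg ?_]
    · omega
    · show ¬ (R m β j ≤ Eik (m+1) α 1 (s β (j-1)))
      rw [hEQ]
      have hsub : (blk m β (s β (j-1))).filter (fun x => α 1 x = s β (j-1))
          ⊆ (blk m β (s β (j-1))).filter (fun x => j < x) := by
        intro x hx
        rw [Finset.mem_filter] at hx ⊢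
        refine ⟨hx.1, ?_⟩
        by_contra hxj
        push_neg at hxj
        obtain ⟨hx1, hx2, _⟩ := (mem_blk m β).mp hx.1
        have hmono := row_mono hα le_rfl (by omega) hxj (show j ≤ m+1-1 by omega)
        have hxv := hx.2
        omega
      have hR : R m β j
          = ((blk m β (s β (j-1))).filter (fun x => j < x)).card + 1 := by
        unfold R
        rw [show Finset.Icc j m = insert j (Finset.Icc (j+1) m) from by
          ext x; simp [Finset.mem_Icc]; omega]
        rw [Finset.filter_insert, if_pos rfl,
          Finset.card_insert_of_notMem (by
            intro hmem
            rw [Finset.mem_filter, Finset.mem_Icc] at hmem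
            omega)]
        congr 1
        apply congrArg Finset.card
        ext x
        rw [Finset.mem_filter, Finset.mem_Icc, Finset.mem_filter]
        constructor
        · rintro ⟨⟨hx1, hx2⟩, hx3⟩
          exact ⟨(mem_blk m β).mpr ⟨by omega, hx2, hx3⟩, by omega⟩
        · rintro ⟨hbx, hjx⟩
          obtain ⟨hx1, hx2, hx3⟩ := (mem_blk m β).mp hbx
          exact ⟨⟨by omega, hx2⟩, hx3⟩
      have hle := Finset.card_le_card hsub
      omega

lemma fiber_eq_glue {α : ℕ → ℕ → ℕ} (hα : IsTSarr (m+1) α) (hsh : shiftM m α = β) :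
    α = glue m β (fun k => Eik (m+1) α 1 k) := by
  funext i j
  by_cases hi1 : i = 1 ∧ j ≤ m
  · obtain ⟨hi, hjm⟩ := hi1
    subst hi
    by_cases hj0 : j = 0
    · subst hj0
      rw [glue_top0 m β _]
      exact hα.2.1 1 le_rfl (by omega)
    · rw [glue_one m β hjm (by omega)]
      exact fiber_top m β hm hβ hα hsh (by omega) hjm
  · by_cases hr : 2 ≤ i ∧ i ≤ m + 1 ∧ j ≤ m + 1 - i
    · rw [glue_lower m β hr.1 hr.2.1 hr.2.2]
      have hfr := fiber_rel m β hm hβ hα hsh (i := i-1) (j := j) (by omega) (by omega) (by omega)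
      rw [show i - 1 + 1 = i from by omega] at hfr
      exact hfr
    · unfold glue
      rw [if_neg hi1, if_neg hr]
      exact hα.1 i j (by omega)

omit hm hβ in
lemma fiber_Eik_le {α : ℕ → ℕ → ℕ} (hα : IsTSarr (m+1) α) (hsh : shiftM m α = β) (k : ℕ)
    (hm : 1 ≤ m) (hβ : IsTSarr m β) : Eik (m+1) α 1 k ≤ c m β k := by
  rw [fiber_EikQ m β hm hβ hα hsh k]
  exact Finset.card_le_card (Finset.filter_subset _ _)

omit hm hβ in
lemma Eik_one_zero {α : ℕ → ℕ → ℕ} (hα : IsTSarr (m+1) α) {i' : ℕ} (hi' : 1 ≤ i') :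
    Eik (m+1) α (i'+1) 1 = 0 := by
  unfold Eik
  rw [Finset.card_eq_zero, Finset.filter_eq_empty_iff]
  intro j hj
  rw [Finset.mem_Icc] at hj
  rintro ⟨hjm, hv, -⟩
  have := (hα.2.2.1 (i'+1) j (by omega) (by omega) hjm).1
  omega

omit hm hβ in
lemma Cik_one_zero {α : ℕ → ℕ → ℕ} (hα : IsTSarr (m+1) α) {i' : ℕ} (hi' : 1 ≤ i') :
    Cik (m+1) α (i'+1+1) 1 = 0 := by
  unfold Cik
  rw [Finset.card_eq_zero, Finset.filter_eq_empty_iff]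
  intro j hj
  rintro ⟨hjm, hv⟩
  by_cases hle : i' + 1 + 1 ≤ m + 1
  · have := (hα.2.2.1 (i'+1+1) j (by omega) hle hjm).1
    omega
  · have := hα.1 (i'+1+1) j (by omega)
    omega

lemma Eik_shift {α : ℕ → ℕ → ℕ} (hα : IsTSarr (m+1) α) (hsh : shiftM m α = β)
    {i' : ℕ} (h1 : 1 ≤ i') (h2 : i' ≤ m) (k' : ℕ) :
    Eik (m+1) α (i'+1) (k'+1) = Eik m β i' k' := by
  unfold Eik
  apply congrArg Finset.card
  ext j
  rw [Finset.mem_filter, Finset.mem_Icc, Finset.mem_filter, Finset.mem_Icc]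
  constructor
  · rintro ⟨⟨hj1, hj2⟩, hjm, hv, heq⟩
    have hjm' : j ≤ m - i' := by omega
    have hr1 : α (i'+1) j = β i' j + 1 := fiber_rel m β hm hβ hα hsh h1 h2 hjm'
    have hr2 : α (i'+1+1) (j-1) = β (i'+1) (j-1) + 1 :=
      fiber_rel m β hm hβ hα hsh (by omega) (by omega) (by omega)
    refine ⟨⟨hj1, by omega⟩, hjm', by omega, by omega⟩
  · rintro ⟨⟨hj1, hj2⟩, hjm, hv, heq⟩
    have hr1 : α (i'+1) j = β i' j + 1 := fiber_rel m β hm hβ hα hsh h1 h2 hjm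
    have hr2 : α (i'+1+1) (j-1) = β (i'+1) (j-1) + 1 :=
      fiber_rel m β hm hβ hα hsh (by omega) (by omega) (by omega)
    refine ⟨⟨hj1, by omega⟩, by omega, by omega, by omega⟩

lemma Cik_shift {α : ℕ → ℕ → ℕ} (hα : IsTSarr (m+1) α) (hsh : shiftM m α = β)
    {i' : ℕ} (h1 : 1 ≤ i') (h2 : i' ≤ m - 1) (k' : ℕ) :
    Cik (m+1) α (i'+1+1) (k'+1) = Cik m β (i'+1) k' := by
  unfold Cik
  apply congrArg Finset.card
  ext j
  rw [Finset.mem_filter, Finset.mem_range, Finset.mem_filter, Finset.mem_range]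
  constructor
  · rintro ⟨hj1, hjm, hv⟩
    have hr1 : α (i'+1+1) j = β (i'+1) j + 1 :=
      fiber_rel m β hm hβ hα hsh (by omega) (by omega) (by omega)
    refine ⟨by omega, by omega, by omega⟩
  · rintro ⟨hj1, hjm, hv⟩
    have hr1 : α (i'+1+1) j = β (i'+1) j + 1 :=
      fiber_rel m β hm hβ hα hsh (by omega) (by omega) (by omega)
    refine ⟨by omega, by omega, by omega⟩

lemma Cik_two {α : ℕ → ℕ → ℕ} (hα : IsTSarr (m+1) α) (hsh : shiftM m α = β) (k : ℕ) :
    Cik (m+1) α 2 k = c m β k := by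
  unfold Cik c
  refine Finset.card_bij' (fun j _ => j + 1) (fun x _ => x - 1) ?_ ?_ ?_ ?_
  · intro j hj
    rw [Finset.mem_filter, Finset.mem_range] at hj
    obtain ⟨hj1, hjm, hv⟩ := hj
    have hr2 : α 2 j = s β j := fiber_row2 m β hm hβ hα hsh (by omega)
    refine (mem_blk m β).mpr ⟨by omega, by omega, ?_⟩
    simp only [Nat.add_sub_cancel]
    omega
  · intro x hx
    obtain ⟨hx1, hx2, hxs⟩ := (mem_blk m β).mp hx
    rw [Finset.mem_filter, Finset.mem_range]
    have hr2 : α 2 (x-1) = s β (x-1) := fiber_row2 m β hm hβ hα hsh (by omega)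
    refine ⟨by omega, by omega, by omega⟩
  · intro j hj; omega
  · intro x hx
    obtain ⟨hx1, _, _⟩ := (mem_blk m β).mp hx
    omega

lemma fiber_Etot {α : ℕ → ℕ → ℕ} (hα : IsTSarr (m+1) α) (hsh : shiftM m α = β) :
    Etot (m+1) α = (∑ k ∈ Finset.Icc 1 (m+1), Eik (m+1) α 1 k) + Etot m β := by
  unfold Etot
  have hins : Finset.Icc 1 (m+1) = insert 1 (Finset.Icc 2 (m+1)) := by
    ext x; simp [Finset.mem_Icc]; omega
  have hshift : ∀ f : ℕ → ℕ, ∑ i ∈ Finset.Icc 2 (m+1), f i = ∑ i ∈ Finset.Icc 1 m, f (i+1) := by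
    intro f
    have h : Finset.Icc 2 (m+1) = Finset.map (addRightEmbedding 1) (Finset.Icc 1 m) := by
      rw [Finset.map_add_right_Icc]
    rw [h, Finset.sum_map]
    rfl
  conv_lhs => rw [hins]
  rw [Finset.sum_insert (by simp)]
  congr 1
  · rw [← hins]
  · rw [hshift]
    apply Finset.sum_congr rfl
    intro i' hi'
    rw [Finset.mem_Icc] at hi'
    rw [Finset.sum_insert (by simp), Eik_one_zero m hα (by omega), zero_add, hshift]
    apply Finset.sum_congr rfl
    intro k' hk'
    exact Eik_shift m β hm hβ hα hsh (by omega) (by omega) (k' := k')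

lemma fiber_prod {α : ℕ → ℕ → ℕ} (hα : IsTSarr (m+1) α) (hsh : shiftM m α = β) :
    ∏ i ∈ Finset.Icc 1 m, ∏ k ∈ Finset.Icc 1 (m+1),
        (Nat.choose (Cik (m+1) α (i + 1) k) (Eik (m+1) α i k) : Polynomial ℤ)
      = (∏ k ∈ Finset.Icc 1 (m+1),
          (Nat.choose (c m β k) (Eik (m+1) α 1 k) : Polynomial ℤ)) *
        ∏ i ∈ Finset.Icc 1 (m - 1), ∏ k ∈ Finset.Icc 1 m,
          (Nat.choose (Cik m β (i + 1) k) (Eik m β i k) : Polynomial ℤ) := by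
  have hins : Finset.Icc 1 m = insert 1 (Finset.Icc 2 m) := by
    ext x; simp [Finset.mem_Icc]; omega
  have hins' : Finset.Icc 1 (m+1) = insert 1 (Finset.Icc 2 (m+1)) := by
    ext x; simp [Finset.mem_Icc]; omega
  have hshift : ∀ f : ℕ → Polynomial ℤ,
      ∏ i ∈ Finset.Icc 2 m, f i = ∏ i ∈ Finset.Icc 1 (m-1), f (i+1) := by
    intro f
    have h : Finset.Icc 2 m = Finset.map (addRightEmbedding 1) (Finset.Icc 1 (m-1)) := by
      rw [Finset.map_add_right_Icc]
      congr 1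
      omega
    rw [h, Finset.prod_map]
    rfl
  have hshift' : ∀ f : ℕ → Polynomial ℤ,
      ∏ k ∈ Finset.Icc 2 (m+1), f k = ∏ k ∈ Finset.Icc 1 m, f (k+1) := by
    intro f
    have h : Finset.Icc 2 (m+1) = Finset.map (addRightEmbedding 1) (Finset.Icc 1 m) := by
      rw [Finset.map_add_right_Icc]
    rw [h, Finset.prod_map]
    rfl
  conv_lhs => rw [hins]
  rw [Finset.prod_insert (by simp)]
  congr 1
  · apply Finset.prod_congr rfl
    intro k hk
    rw [Cik_two m β hm hβ hα hsh k]
  · rw [hshift]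
    apply Finset.prod_congr rfl
    intro i' hi'
    rw [Finset.mem_Icc] at hi'
    conv_lhs => rw [hins']
    rw [Finset.prod_insert (by simp)]
    rw [Cik_one_zero m hα (by omega), Eik_one_zero m hα (by omega)]
    norm_num
    rw [hshift']
    apply Finset.prod_congr rfl
    intro k' hk'
    rw [Cik_shift m β hm hβ hα hsh (by omega) (by omega) k',
      Eik_shift m β hm hβ hα hsh (by omega) (by omega) k']

lemma fiber_sum :
    ∑ α ∈ ((ts_finite (m+1)).toFinset.filter (fun α => shiftM m α = β)),
        ((Polynomial.X : Polynomial ℤ) ^ (∑ k ∈ Finset.Icc 1 (m+1), Eik (m+1) α 1 k) *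
          ∏ k ∈ Finset.Icc 1 (m+1),
            (Nat.choose (c m β k) (Eik (m+1) α 1 k) : Polynomial ℤ))
      = (1 + Polynomial.X) ^ m := by
  have hrhs : ((1 + Polynomial.X : Polynomial ℤ)) ^ m
      = ∑ p ∈ (Finset.Icc 1 (m+1)).pi (fun k => Finset.Iic (c m β k)),
          ∏ x ∈ (Finset.Icc 1 (m+1)).attach,
            ((Nat.choose (c m β x.1) (p x.1 x.2) : Polynomial ℤ) * Polynomial.X ^ (p x.1 x.2)) := by
    calc ((1 + Polynomial.X : Polynomial ℤ)) ^ m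
        = (1 + Polynomial.X : Polynomial ℤ) ^ (∑ k ∈ Finset.Icc 1 (m+1), c m β k) := by
          rw [sum_c m β hm hβ]
      _ = ∏ k ∈ Finset.Icc 1 (m+1), (1 + Polynomial.X : Polynomial ℤ) ^ (c m β k) := by
          rw [Finset.prod_pow_eq_pow_sum]
      _ = ∏ k ∈ Finset.Icc 1 (m+1), ∑ b ∈ Finset.Iic (c m β k),
            ((Nat.choose (c m β k) b : Polynomial ℤ) * Polynomial.X ^ b) :=
          Finset.prod_congr rfl fun k _ => (binom_sum _).symm
      _ = _ := Finset.prod_sum _ _ _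
  rw [hrhs]
  refine Finset.sum_nbij' (fun α => fun k _ => Eik (m+1) α 1 k)
    (fun p => glue m β (fun k => if h : k ∈ Finset.Icc 1 (m+1) then p k h else 0))
    ?_ ?_ ?_ ?_ ?_
  · intro α hα
    rw [Finset.mem_filter, Set.Finite.mem_toFinset] at hα
    rw [Finset.mem_pi]
    intro k hk
    rw [Finset.mem_Iic]
    exact fiber_Eik_le m β hα.1 hα.2 k hm hβ
  · intro p hp
    rw [Finset.mem_filter, Set.Finite.mem_toFinset]
    exact ⟨glue_isTS m β hm hβ _, shift_glue m β hm hβ _⟩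
  · intro α hα
    rw [Finset.mem_filter, Set.Finite.mem_toFinset] at hα
    show glue m β (fun k => if _ : k ∈ Finset.Icc 1 (m+1) then Eik (m+1) α 1 k else 0) = α
    have hcg := glue_congr m β hm hβ
      (e := fun k => if _ : k ∈ Finset.Icc 1 (m+1) then Eik (m+1) α 1 k else 0)
      (e' := fun k => Eik (m+1) α 1 k)
      (by intro k h1 h2; exact dif_pos (Finset.mem_Icc.mpr ⟨h1, h2⟩))
    rw [hcg]
    exact (fiber_eq_glue m β hm hβ hα.1 hα.2).symm
  · intro p hp
    funext k hk
    set e0 : ℕ → ℕ := fun k => if h : k ∈ Finset.Icc 1 (m+1) then p k h else 0 with he0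
    show Eik (m+1) (glue m β e0) 1 k = p k hk
    rw [Eik_glue m β hm hβ e0 k]
    have h1 : e0 k = p k hk := dif_pos hk
    rw [h1]
    exact min_eq_left (Finset.mem_Iic.mp (Finset.mem_pi.mp hp k hk))
  · intro α hα
    show (Polynomial.X : Polynomial ℤ) ^ (∑ k ∈ Finset.Icc 1 (m+1), Eik (m+1) α 1 k) *
          (∏ k ∈ Finset.Icc 1 (m+1), (Nat.choose (c m β k) (Eik (m+1) α 1 k) : Polynomial ℤ))
        = ∏ x ∈ (Finset.Icc 1 (m+1)).attach,
            ((Nat.choose (c m β x.1) (Eik (m+1) α 1 x.1) : Polynomial ℤ) *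
              Polynomial.X ^ (Eik (m+1) α 1 x.1))
    rw [Finset.prod_mul_distrib,
      Finset.prod_attach _ (fun k => (Nat.choose (c m β k) (Eik (m+1) α 1 k) : Polynomial ℤ)),
      Finset.prod_attach _ (fun k => (Polynomial.X : Polynomial ℤ) ^ (Eik (m+1) α 1 k)),
      Finset.prod_pow_eq_pow_sum]
    ring

end WithHyp

end Step

end TSaux

/-- The λ-generating function of tournaments expanded as a sum over TSSCPP arrays,
in `ℤ[λ]`:
`(1+λ)^(binomial(n,2)) = Σ_{α ∈ TS_n} λ^{E(α)} ∏_{i=1}^{n-1} ∏_{k=1}^{n}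
binomial(C_{i+1,k}(α), E_{i,k}(α))`. -/
theorem stmt15 (n : ℕ) (hn : 1 ≤ n) :
    ((1 + Polynomial.X : Polynomial ℤ)) ^ (n.choose 2) =
      ∑ᶠ α ∈ {α : ℕ → ℕ → ℕ | IsTSarr n α},
        (Polynomial.X : Polynomial ℤ) ^ (Etot n α) *
          ∏ i ∈ Finset.Icc 1 (n - 1), ∏ k ∈ Finset.Icc 1 n,
            (Nat.choose (Cik n α (i + 1) k) (Eik n α i k) : Polynomial ℤ) := by
  classical
  induction n with
  | zero => omega
  | succ m IH =>
    by_cases hm : 1 ≤ m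
    · -- inductive step
      have IH' := IH hm
      simp only [Nat.add_sub_cancel]
      have hfin := TSaux.ts_finite (m+1)
      rw [← Set.Finite.coe_toFinset hfin, finsum_mem_coe_finset]
      have hmap : ∀ α ∈ hfin.toFinset, TSaux.shiftM m α ∈ (TSaux.ts_finite m).toFinset := by
        intro α hα
        rw [Set.Finite.mem_toFinset] at hα ⊢
        exact TSaux.shift_mem m hα
      rw [← Finset.sum_fiberwise_of_maps_to hmap]
      have hfib : ∀ b ∈ (TSaux.ts_finite m).toFinset,
          (∑ α ∈ hfin.toFinset.filter (fun α => TSaux.shiftM m α = b),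
              ((Polynomial.X : Polynomial ℤ) ^ Etot (m+1) α *
                ∏ i ∈ Finset.Icc 1 m, ∏ k ∈ Finset.Icc 1 (m+1),
                  (Nat.choose (Cik (m+1) α (i+1) k) (Eik (m+1) α i k) : Polynomial ℤ)))
          = (1 + Polynomial.X) ^ m *
              ((Polynomial.X : Polynomial ℤ) ^ Etot m b *
                ∏ i ∈ Finset.Icc 1 (m-1), ∏ k ∈ Finset.Icc 1 m,
                  (Nat.choose (Cik m b (i+1) k) (Eik m b i k) : Polynomial ℤ)) := by
        intro b hb
        rw [Set.Finite.mem_toFinset] at hb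
        have hterm : ∀ α ∈ hfin.toFinset.filter (fun α => TSaux.shiftM m α = b),
            ((Polynomial.X : Polynomial ℤ) ^ Etot (m+1) α *
                ∏ i ∈ Finset.Icc 1 m, ∏ k ∈ Finset.Icc 1 (m+1),
                  (Nat.choose (Cik (m+1) α (i+1) k) (Eik (m+1) α i k) : Polynomial ℤ))
            = ((Polynomial.X : Polynomial ℤ) ^ (∑ k ∈ Finset.Icc 1 (m+1), Eik (m+1) α 1 k) *
                ∏ k ∈ Finset.Icc 1 (m+1),
                  (Nat.choose (TSaux.c m b k) (Eik (m+1) α 1 k) : Polynomial ℤ)) *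
              ((Polynomial.X : Polynomial ℤ) ^ Etot m b *
                ∏ i ∈ Finset.Icc 1 (m-1), ∏ k ∈ Finset.Icc 1 m,
                  (Nat.choose (Cik m b (i+1) k) (Eik m b i k) : Polynomial ℤ)) := by
          intro α hα
          rw [Finset.mem_filter, Set.Finite.mem_toFinset] at hα
          rw [TSaux.fiber_Etot m b hm hb hα.1 hα.2, TSaux.fiber_prod m b hm hb hα.1 hα.2,
            pow_add]
          ring
        rw [Finset.sum_congr rfl hterm, ← Finset.sum_mul, TSaux.fiber_sum m b hm hb]
      rw [Finset.sum_congr rfl hfib, ← Finset.mul_sum]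
      rw [← finsum_mem_coe_finset, Set.Finite.coe_toFinset]
      rw [← IH', ← pow_add]
      congr 1
      rw [Nat.choose_succ_succ, Nat.choose_one_right]
    · -- base case n = 1
      have hm0 : m = 0 := by omega
      subst hm0
      have hset : {α : ℕ → ℕ → ℕ | IsTSarr 1 α}
          = {fun i j => if i = 1 ∧ j = 0 then (1:ℕ) else 0} := by
        ext α
        simp only [Set.mem_setOf_eq, Set.mem_singleton_iff]
        constructor
        · intro hα
          funext i j
          by_cases h : i = 1 ∧ j = 0
          · rw [if_pos h]
            obtain ⟨hi, hj⟩ := h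
            subst hi; subst hj
            exact hα.2.1 1 le_rfl le_rfl
          · rw [if_neg h]
            exact hα.1 i j (by omega)
        · rintro rfl
          refine ⟨?_, ?_, ?_, ?_, ?_⟩
          · intro i j h
            dsimp only
            rw [if_neg (by omega)]
          · intro i h1 h2
            dsimp only
            rw [if_pos ⟨by omega, rfl⟩]
            omega
          · intro i j h1 h2 hj
            dsimp only
            rw [if_pos ⟨by omega, by omega⟩]
            omega
          · intro i j h1 h2 hj
            exact absurd hj (by omega)
          · intro i j h1 h2 hj1 hj2
            exact absurd h2 (by omega)
      rw [hset, finsum_mem_singleton]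
      have hE : Etot 1 (fun i j => if i = 1 ∧ j = 0 then (1:ℕ) else 0) = 0 := by
        unfold Etot Eik
        apply Finset.sum_eq_zero; intro i hi
        apply Finset.sum_eq_zero; intro k hk
        rw [Finset.card_eq_zero, Finset.filter_eq_empty_iff]
        intro j hj
        rw [Finset.mem_Icc] at hj hi
        rintro ⟨hj0, -⟩
        omega
      rw [hE, pow_zero, one_mul]
      rw [show (1:ℕ) - 1 = 0 from rfl, Finset.Icc_eq_empty (by omega), Finset.prod_empty]
      rw [show Nat.choose 1 2 = 0 from rfl, pow_zero]
end

section
/- For every integer n ≥ 1, 2^{binomial(n,2)} = Σ_{α ∈ TS_n} ∏_{i=1}^{n−1} ∏_{k=1}^{n} binomial(C_{i+1,k}(α), E_{i,k}(α)), where the sum is over all TSSCPP arrays α of order n. -/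
open scoped Classical

namespace TS17

/-- Partial TSSCPP arrays: rows `m,…,n` only. -/
def IsTSfrom (n m : ℕ) (α : ℕ → ℕ → ℕ) : Prop :=
  (∀ i j, ¬(m ≤ i ∧ i ≤ n ∧ j ≤ n - i) → α i j = 0) ∧
  (∀ i, m ≤ i → i ≤ n → α i 0 = i) ∧
  (∀ i j, m ≤ i → i ≤ n → j ≤ n - i → i ≤ α i j ∧ α i j ≤ i + j) ∧
  (∀ i j, m ≤ i → i ≤ n → j + 1 ≤ n - i → α i j ≤ α i (j + 1)) ∧
  (∀ i j, m ≤ i → i + 1 ≤ n → 1 ≤ j → j ≤ n - i →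
    α (i + 1) (j - 1) - 1 ≤ α i j ∧ α i j ≤ α (i + 1) (j - 1))

/-- Suffix count: number of positions `j' ∈ [j, n-m]` whose southwest neighbor
in row `m+1` has the same value as that of `j`. -/
def scnt (n m : ℕ) (β : ℕ → ℕ → ℕ) (j : ℕ) : ℕ :=
  ((Finset.Icc j (n - m)).filter (fun j' => β (m+1) (j'-1) = β (m+1) (j-1))).card

/-- Construct row `m` from row `m+1` of `β` and the count data `e`. -/
def mkRow (n m : ℕ) (β : ℕ → ℕ → ℕ) (e : ℕ → ℕ) (j : ℕ) : ℕ :=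
  if n - m < j then 0
  else if j = 0 then m
  else if scnt n m β j ≤ e (β (m+1) (j-1)) then β (m+1) (j-1) else β (m+1) (j-1) - 1

/-- Glue the constructed row `m` on top of `β`. -/
def mkArr (n m : ℕ) (β : ℕ → ℕ → ℕ) (e : ℕ → ℕ) : ℕ → ℕ → ℕ :=
  fun i j => if i = m then mkRow n m β e j else β i j

/-- The finite set of admissible count functions `e`. -/
noncomputable def EF (n m : ℕ) (β : ℕ → ℕ → ℕ) : Finset (ℕ → ℕ) :=
  ((Finset.Icc 1 n).pi (fun k => Finset.range (Cik n β (m+1) k + 1))).image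
    (fun p k => if h : k ∈ Finset.Icc 1 n then p k h else 0)

def baseArr (n : ℕ) : ℕ → ℕ → ℕ := fun i j => if i = n ∧ j = 0 then n else 0

/-- The finite set of partial TSSCPP arrays with rows `n-d,…,n`. -/
noncomputable def TSF (n : ℕ) : ℕ → Finset (ℕ → ℕ → ℕ)
  | 0 => {baseArr n}
  | d+1 => (TSF n d).biUnion
      (fun β => (EF n (n-(d+1)) β).image (fun e => mkArr n (n-(d+1)) β e))

lemma mem_EF_iff {n m : ℕ} {β : ℕ → ℕ → ℕ} {e : ℕ → ℕ} :
    e ∈ EF n m β ↔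
      (∀ k, (k ∈ Finset.Icc 1 n → e k ≤ Cik n β (m+1) k) ∧
        (k ∉ Finset.Icc 1 n → e k = 0)) := by
  constructor
  · rintro he k
    simp only [EF, Finset.mem_image] at he
    obtain ⟨p, hp, rfl⟩ := he
    rw [Finset.mem_pi] at hp
    constructor
    · intro hk
      have := hp k hk
      rw [Finset.mem_range] at this
      show (if h : k ∈ Finset.Icc 1 n then p k h else 0) ≤ Cik n β (m+1) k
      rw [dif_pos hk]
      exact Nat.lt_succ_iff.mp this
    · intro hk
      show (if h : k ∈ Finset.Icc 1 n then p k h else 0) = 0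
      rw [dif_neg hk]
  · intro he
    simp only [EF, Finset.mem_image]
    refine ⟨fun k _ => e k, ?_, ?_⟩
    · rw [Finset.mem_pi]
      intro k hk
      rw [Finset.mem_range, Nat.lt_succ_iff]
      exact (he k).1 hk
    · funext k
      by_cases hk : k ∈ Finset.Icc 1 n
      · rw [dif_pos hk]
      · rw [dif_neg hk, (he k).2 hk]

lemma rowMono {n m : ℕ} {α : ℕ → ℕ → ℕ} (hα : IsTSfrom n m α)
    {i j j' : ℕ} (him : m ≤ i) (hin : i ≤ n) (hjj' : j ≤ j') (hj' : j' ≤ n - i) :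
    α i j ≤ α i j' := by
  have key : ∀ d, j + d ≤ n - i → α i j ≤ α i (j + d) := by
    intro d
    induction d with
    | zero => intro _; exact le_rfl
    | succ d ih =>
      intro h
      have hstep := hα.2.2.2.1 i (j + d) him hin (by omega)
      exact (ih (by omega)).trans hstep
  obtain ⟨d, rfl⟩ := Nat.exists_eq_add_of_le hjj'
  exact key d hj' 

section Step

variable {n m : ℕ} {β : ℕ → ℕ → ℕ} {e : ℕ → ℕ}

lemma mkArr_apply_ne {i : ℕ} (h : i ≠ m) : mkArr n m β e i = β i := by
  funext j; simp [mkArr, h]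

lemma mkArr_apply_self : mkArr n m β e m = mkRow n m β e := by
  funext j; simp [mkArr]

lemma Cik_row_eq {n i k : ℕ} {α α' : ℕ → ℕ → ℕ} (h : α i = α' i) :
    Cik n α i k = Cik n α' i k := by
  unfold Cik; rw [h]

lemma Eik_row_eq {n i k : ℕ} {α α' : ℕ → ℕ → ℕ} (h1 : α i = α' i)
    (h2 : α (i+1) = α' (i+1)) : Eik n α i k = Eik n α' i k := by
  unfold Eik; rw [h1, h2]

/-- The block of positions `j ∈ [1, n-m]` whose southwest neighbor in row `m+1`
has value `k`. -/
def blk (n m k : ℕ) (β : ℕ → ℕ → ℕ) : Finset ℕ :=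
  (Finset.Icc 1 (n - m)).filter (fun j => β (m+1) (j-1) = k)

lemma blk_card {k : ℕ} (hmn : m + 1 ≤ n) :
    (blk n m k β).card = Cik n β (m+1) k := by
  apply Finset.card_nbij' (fun j => j - 1) (fun j => j + 1)
  · intro a ha
    simp only [blk, Finset.mem_coe, Finset.mem_filter, Finset.mem_Icc] at ha
    simp only [Finset.mem_coe, Finset.mem_filter, Finset.mem_range]
    refine ⟨by omega, by omega, ha.2⟩
  · intro a ha
    simp only [Finset.mem_coe, Finset.mem_filter, Finset.mem_range] at ha
    simp only [blk, Finset.mem_coe, Finset.mem_filter, Finset.mem_Icc]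
    refine ⟨⟨by omega, by omega⟩, by simpa using ha.2.2⟩
  · intro a ha
    simp only [blk, Finset.mem_coe, Finset.mem_filter, Finset.mem_Icc] at ha
    show a - 1 + 1 = a
    omega
  · intro a _; show a + 1 - 1 = a; omega

lemma scnt_pos {j : ℕ} (hj1 : 1 ≤ j) (hjN : j ≤ n - m) : 0 < scnt n m β j := by
  apply Finset.card_pos.mpr
  exact ⟨j, by simp [Finset.mem_filter, Finset.mem_Icc, hjN]⟩

lemma scnt_lt {j j' : ℕ} (hj1 : 1 ≤ j) (hj' : j < j') (hj'N : j' ≤ n - m)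
    (hv : β (m+1) (j'-1) = β (m+1) (j-1)) : scnt n m β j' < scnt n m β j := by
  apply Finset.card_lt_card
  constructor
  · intro x hx
    simp only [Finset.mem_filter, Finset.mem_Icc] at hx ⊢
    exact ⟨⟨by omega, hx.1.2⟩, by rw [hx.2, hv]⟩
  · intro hsub
    have hjmem : j ∈ (Finset.Icc j (n - m)).filter
        (fun j'' => β (m+1) (j''-1) = β (m+1) (j-1)) := by
      simp [Finset.mem_filter, Finset.mem_Icc]; omega
    have := hsub hjmem
    simp only [Finset.mem_filter, Finset.mem_Icc] at this
    omega

lemma scnt_le_blk {j k : ℕ} (hk : β (m+1) (j-1) = k) (hj1 : 1 ≤ j) :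
    scnt n m β j ≤ (blk n m k β).card := by
  apply Finset.card_le_card
  intro x hx
  simp only [Finset.mem_filter, Finset.mem_Icc] at hx
  simp only [blk, Finset.mem_filter, Finset.mem_Icc]
  exact ⟨⟨by omega, hx.1.2⟩, by rw [hx.2, hk]⟩

lemma scnt_injOn {k : ℕ} : Set.InjOn (scnt n m β) (blk n m k β) := by
  intro a ha b hb hab
  simp only [blk, Finset.coe_filter, Set.mem_setOf_eq, Finset.mem_Icc] at ha hb
  by_contra hne
  rcases Nat.lt_or_ge a b with h | h
  · have := scnt_lt (β := β) ha.1.1 h hb.1.2 (by rw [hb.2, ha.2])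
    omega
  · have hba : b < a := by omega
    have := scnt_lt (β := β) hb.1.1 hba ha.1.2 (by rw [ha.2, hb.2])
    omega

lemma blk_scnt_image {k : ℕ} :
    (blk n m k β).image (scnt n m β) = Finset.Icc 1 (blk n m k β).card := by
  apply Finset.eq_of_subset_of_card_le
  · intro v hv
    simp only [Finset.mem_image] at hv
    obtain ⟨j, hj, rfl⟩ := hv
    have hj' := hj
    simp only [blk, Finset.mem_filter, Finset.mem_Icc] at hj'
    rw [Finset.mem_Icc]
    exact ⟨scnt_pos hj'.1.1 hj'.1.2, scnt_le_blk hj'.2 hj'.1.1⟩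
  · rw [Nat.card_Icc]
    rw [Finset.card_image_of_injOn scnt_injOn]
    omega

lemma card_blk_filter {k e0 : ℕ} (he : e0 ≤ (blk n m k β).card) :
    ((blk n m k β).filter (fun j => scnt n m β j ≤ e0)).card = e0 := by
  have himg : ((blk n m k β).filter (fun j => scnt n m β j ≤ e0)).image (scnt n m β)
      = Finset.Icc 1 e0 := by
    apply subset_antisymm
    · intro v hv
      simp only [Finset.mem_image, Finset.mem_filter] at hv
      obtain ⟨j, ⟨hj, hje⟩, rfl⟩ := hv
      simp only [blk, Finset.mem_filter, Finset.mem_Icc] at hj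
      rw [Finset.mem_Icc]
      exact ⟨scnt_pos hj.1.1 hj.1.2, hje⟩
    · intro v hv
      rw [Finset.mem_Icc] at hv
      have : v ∈ (blk n m k β).image (scnt n m β) := by
        rw [blk_scnt_image, Finset.mem_Icc]; omega
      simp only [Finset.mem_image] at this
      obtain ⟨j, hj, rfl⟩ := this
      simp only [Finset.mem_image, Finset.mem_filter]
      exact ⟨j, ⟨hj, hv.2⟩, rfl⟩
  have hcard : ((blk n m k β).filter (fun j => scnt n m β j ≤ e0)).card
      = (((blk n m k β).filter (fun j => scnt n m β j ≤ e0)).image (scnt n m β)).card := by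
    rw [Finset.card_image_of_injOn (scnt_injOn.mono (by
      intro x hx
      simp only [Finset.coe_filter, Set.mem_setOf_eq] at hx
      exact hx.1))]
  rw [hcard, himg, Nat.card_Icc]
  omega

lemma mkRow_spec {j : ℕ} (hj1 : 1 ≤ j) (hjN : j ≤ n - m) :
    (scnt n m β j ≤ e (β (m+1) (j-1)) ∧ mkRow n m β e j = β (m+1) (j-1)) ∨
    (¬ scnt n m β j ≤ e (β (m+1) (j-1)) ∧ mkRow n m β e j = β (m+1) (j-1) - 1) := by
  unfold mkRow
  rw [if_neg (by omega : ¬ n - m < j), if_neg (by omega : ¬ j = 0)]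
  by_cases hc : scnt n m β j ≤ e (β (m+1) (j-1))
  · exact Or.inl ⟨hc, if_pos hc⟩
  · exact Or.inr ⟨hc, if_neg hc⟩

lemma mkArr_isTS (hm : 1 ≤ m) (hmn : m + 1 ≤ n)
    (hβ : IsTSfrom n (m+1) β) (he : e ∈ EF n m β) :
    IsTSfrom n m (mkArr n m β e) := by
  obtain ⟨hz, hc0, hbd, hmo, hdg⟩ := hβ
  have hrlb : ∀ j, j ≤ n - (m+1) → m + 1 ≤ β (m+1) j :=
    fun j hj => (hbd (m+1) j le_rfl hmn hj).1
  have hrub : ∀ j, j ≤ n - (m+1) → β (m+1) j ≤ m + 1 + j :=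
    fun j hj => (hbd (m+1) j le_rfl hmn hj).2
  refine ⟨?_, ?_, ?_, ?_, ?_⟩
  · -- zero outside
    intro i j hij
    by_cases h : i = m
    · simp only [mkArr, if_pos h]
      unfold mkRow
      rw [if_pos (by omega : n - m < j)]
    · simp only [mkArr, if_neg h]
      exact hz i j (by omega)
  · -- column 0
    intro i him hin
    by_cases h : i = m
    · simp only [mkArr, if_pos h]
      unfold mkRow
      rw [if_neg (by omega : ¬ n - m < 0), if_pos rfl]
      omega
    · simp only [mkArr, if_neg h]
      exact hc0 i (by omega) hin
  · -- bounds
    intro i j him hin hj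
    by_cases h : i = m
    · simp only [mkArr, if_pos h]
      by_cases hj0 : j = 0
      · subst hj0
        unfold mkRow
        rw [if_neg (by omega : ¬ n - m < 0), if_pos rfl]
        omega
      · have hjN : j ≤ n - m := by omega
        have hlb := hrlb (j-1) (by omega)
        have hub := hrub (j-1) (by omega)
        rcases mkRow_spec (e := e) (by omega : 1 ≤ j) hjN with ⟨-, ht⟩ | ⟨-, ht⟩ <;>
          rw [ht] <;> omega
    · simp only [mkArr, if_neg h]
      have := hbd i j (by omega) hin hj
      omega
  · -- weakly increasing rows
    intro i j him hin hj1
    by_cases h : i = m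
    · simp only [mkArr, if_pos h]
      have hjn : j + 1 ≤ n - m := by omega
      by_cases hj0 : j = 0
      · subst hj0
        have h1 : β (m+1) 0 = m + 1 := hc0 (m+1) le_rfl hmn
        have hs : mkRow n m β e 0 = m := by
          unfold mkRow
          rw [if_neg (by omega : ¬ n - m < 0), if_pos rfl]
        rw [hs]
        rcases mkRow_spec (e := e) le_rfl (by omega : 0 + 1 ≤ n - m) with ⟨-, ht⟩ | ⟨-, ht⟩ <;>
          rw [ht] <;> rw [show (0:ℕ)+1-1 = 0 from rfl, h1] <;> omega
      · have hj1' : 1 ≤ j := by omega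
        have hjN : j ≤ n - m := by omega
        have hk1lb : m + 1 ≤ β (m+1) (j-1) := hrlb (j-1) (by omega)
        have hk12 : β (m+1) (j-1) ≤ β (m+1) j := by
          have := hmo (m+1) (j-1) le_rfl hmn (by omega : (j-1) + 1 ≤ n - (m+1))
          have hjj : j - 1 + 1 = j := by omega
          rwa [hjj] at this
        have hsub : (j : ℕ) + 1 - 1 = j := rfl
        rcases mkRow_spec (e := e) hj1' hjN with ⟨hc1, ht1⟩ | ⟨hc1, ht1⟩
        · rcases mkRow_spec (e := e) (by omega : 1 ≤ j + 1) hjn with ⟨hc2, ht2⟩ | ⟨hc2, ht2⟩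
          · rw [ht1, ht2, hsub]; exact hk12
          · rw [hsub] at ht2 hc2
            by_cases heq : β (m+1) (j-1) = β (m+1) j
            · exfalso
              have hlt : scnt n m β (j+1) < scnt n m β j :=
                scnt_lt hj1' (by omega) hjn (by rw [hsub, heq])
              rw [← heq] at hc2
              omega
            · rw [ht1, ht2]; omega
        · rcases mkRow_spec (e := e) (by omega : 1 ≤ j + 1) hjn with ⟨hc2, ht2⟩ | ⟨hc2, ht2⟩ <;>
            rw [ht1, ht2, hsub] <;> omega
    · simp only [mkArr, if_neg h]
      exact hmo i j (by omega) hin hj1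
  · -- diagonal constraints
    intro i j him hin1 hj1 hjN
    by_cases h : i = m
    · simp only [mkArr, if_pos h, if_neg (show ¬ i + 1 = m by omega)]
      have hjN' : j ≤ n - m := by omega
      have hrw : i + 1 = m + 1 := by omega
      rw [hrw]
      rcases mkRow_spec (e := e) hj1 hjN' with ⟨-, ht⟩ | ⟨-, ht⟩ <;> rw [ht] <;> omega
    · simp only [mkArr, if_neg h, if_neg (show ¬ i + 1 = m by omega)]
      exact hdg i j (by omega) hin1 hj1 hjN

lemma Eik_mkArr (hm : 1 ≤ m) (hmn : m + 1 ≤ n)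
    (hβ : IsTSfrom n (m+1) β) (he : e ∈ EF n m β) {k : ℕ}
    (hk : k ∈ Finset.Icc 1 n) :
    Eik n (mkArr n m β e) m k = e k := by
  have h1 : mkArr n m β e m = mkRow n m β e := mkArr_apply_self
  have h2 : mkArr n m β e (m+1) = β (m+1) := mkArr_apply_ne (by omega)
  have hek : e k ≤ (blk n m k β).card := by
    rw [blk_card hmn]; exact ((mem_EF_iff.mp he) k).1 hk
  unfold Eik
  rw [h1, h2]
  have hfe : (Finset.Icc 1 n).filter
      (fun j => j ≤ n - m ∧ mkRow n m β e j = k ∧ mkRow n m β e j = β (m+1) (j-1))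
      = (blk n m k β).filter (fun j => scnt n m β j ≤ e k) := by
    ext j
    simp only [Finset.mem_filter, Finset.mem_Icc, blk]
    constructor
    · rintro ⟨⟨hj1, hjn⟩, hjN, hv, hd⟩
      have hrlb : m + 1 ≤ β (m+1) (j-1) :=
        (hβ.2.2.1 (m+1) (j-1) le_rfl hmn (by omega)).1
      unfold mkRow at hv hd
      rw [if_neg (by omega : ¬ n - m < j), if_neg (by omega : ¬ j = 0)] at hv hd
      by_cases hc : scnt n m β j ≤ e (β (m+1) (j-1))
      · rw [if_pos hc] at hv
        rw [hv] at hc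
        exact ⟨⟨⟨hj1, hjN⟩, hv⟩, hc⟩
      · rw [if_neg hc] at hd
        omega
    · rintro ⟨⟨⟨hj1, hjN⟩, hv⟩, hsc⟩
      have hrlb : m + 1 ≤ β (m+1) (j-1) :=
        (hβ.2.2.1 (m+1) (j-1) le_rfl hmn (by omega)).1
      refine ⟨⟨hj1, by omega⟩, hjN, ?_, ?_⟩
      · unfold mkRow
        rw [if_neg (by omega : ¬ n - m < j), if_neg (by omega : ¬ j = 0),
          if_pos (by rw [hv]; exact hsc)]
        exact hv
      · unfold mkRow
        rw [if_neg (by omega : ¬ n - m < j), if_neg (by omega : ¬ j = 0),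
          if_pos (by rw [hv]; exact hsc)]
  rw [hfe]
  exact card_blk_filter hek

lemma mkArr_surj (hm : 1 ≤ m) (hmn : m + 1 ≤ n) {α : ℕ → ℕ → ℕ}
    (hα : IsTSfrom n m α) :
    ∃ β' e', IsTSfrom n (m+1) β' ∧ e' ∈ EF n m β' ∧ mkArr n m β' e' = α := by
  have hαfull := hα
  obtain ⟨hz, hc0, hbd, hmo, hdg⟩ := hα
  set β' : ℕ → ℕ → ℕ := fun i j => if i = m then 0 else α i j with hβ'def
  set e' : ℕ → ℕ := fun k => if k ∈ Finset.Icc 1 n then Eik n α m k else 0 with he'def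
  have hβrow : ∀ i, i ≠ m → β' i = α i := by
    intro i hi; funext j; simp only [hβ'def, if_neg hi]
  have hβ1 : β' (m+1) = α (m+1) := hβrow _ (by omega)
  have hβ'TS : IsTSfrom n (m+1) β' := by
    refine ⟨?_, ?_, ?_, ?_, ?_⟩
    · intro i j hij
      by_cases h : i = m
      · simp only [hβ'def, if_pos h]
      · rw [hβrow i h]; exact hz i j (by omega)
    · intro i him hin; rw [hβrow i (by omega)]; exact hc0 i (by omega) hin
    · intro i j him hin hj; rw [hβrow i (by omega)]; exact hbd i j (by omega) hin hj
    · intro i j him hin hj; rw [hβrow i (by omega)]; exact hmo i j (by omega) hin hj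
    · intro i j him hin hj1 hjN
      rw [hβrow i (by omega), hβrow (i+1) (by omega)]
      exact hdg i j (by omega) hin hj1 hjN
  have he'mem : e' ∈ EF n m β' := by
    rw [mem_EF_iff]
    intro k
    constructor
    · intro hk
      rw [Cik_row_eq hβ1]
      simp only [he'def, if_pos hk]
      unfold Eik Cik
      apply Finset.card_le_card_of_injOn (fun j => j - 1)
      · intro j hj
        simp only [Finset.mem_coe, Finset.mem_filter, Finset.mem_Icc] at hj
        simp only [Finset.mem_coe, Finset.mem_filter, Finset.mem_range]
        obtain ⟨⟨hj1, hjn⟩, hjN, hv, hd⟩ := hj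
        refine ⟨by omega, by omega, ?_⟩
        rw [← hd, hv]
      · intro a ha b hb hab
        simp only [Finset.coe_filter, Set.mem_setOf_eq, Finset.mem_Icc] at ha hb
        have hab' : a - 1 = b - 1 := hab
        omega
    · intro hk; simp only [he'def, if_neg hk]
  refine ⟨β', e', hβ'TS, he'mem, ?_⟩
  funext i j
  by_cases h : i = m
  · simp only [mkArr, if_pos h]
    rw [h]
    by_cases hbig : n - m < j
    · unfold mkRow; rw [if_pos hbig]
      exact (hz m j (by omega)).symm
    · by_cases hj0 : j = 0
      · subst hj0; unfold mkRow; rw [if_neg hbig, if_pos rfl]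
        exact (hc0 m le_rfl (by omega)).symm
      · have hj1 : 1 ≤ j := by omega
        have hjN : j ≤ n - m := by omega
        have hklb : m + 1 ≤ α (m+1) (j-1) := (hbd (m+1) (j-1) (by omega) hmn (by omega)).1
        have hkub : α (m+1) (j-1) ≤ n := by
          have := (hbd (m+1) (j-1) (by omega) hmn (by omega)).2
          omega
        have hkIcc : α (m+1) (j-1) ∈ Finset.Icc 1 n := by rw [Finset.mem_Icc]; omega
        have hdiag := hdg m j le_rfl hmn hj1 hjN
        have he'v : e' (β' (m+1) (j-1)) = Eik n α m (α (m+1) (j-1)) := by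
          rw [hβ1]
          simp only [he'def, if_pos hkIcc]
        have hjS : j ∈ (Finset.Icc j (n-m)).filter
            (fun j' => β' (m+1) (j'-1) = β' (m+1) (j-1)) := by
          simp only [Finset.mem_filter, Finset.mem_Icc]
          exact ⟨⟨le_rfl, hjN⟩, trivial⟩
        have claimA : α m j = α (m+1) (j-1) →
            scnt n m β' j ≤ Eik n α m (α (m+1) (j-1)) := by
          intro hv
          unfold scnt Eik
          apply Finset.card_le_card
          intro j' hj'
          simp only [Finset.mem_filter, Finset.mem_Icc] at hj' ⊢
          obtain ⟨⟨hjj', hj'N⟩, hval⟩ := hj'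
          rw [hβ1] at hval
          have hup : α m j ≤ α m j' := rowMono hαfull le_rfl (by omega) hjj' hj'N
          have hdn : α m j' ≤ α (m+1) (j'-1) := (hdg m j' le_rfl hmn (by omega) hj'N).2
          have hv' : α m j' = α (m+1) (j-1) := by omega
          refine ⟨⟨by omega, by omega⟩, hj'N, hv', by omega⟩
        have claimB : α m j ≠ α (m+1) (j-1) →
            Eik n α m (α (m+1) (j-1)) < scnt n m β' j := by
          intro hne
          have hamj : α m j < α (m+1) (j-1) := by omega
          unfold scnt Eik
          have hsubset : (Finset.Icc 1 n).filter
              (fun j' => j' ≤ n - m ∧ α m j' = α (m+1) (j-1) ∧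
                α m j' = α (m + 1) (j' - 1))
              ⊆ ((Finset.Icc j (n-m)).filter
                (fun j' => β' (m+1) (j'-1) = β' (m+1) (j-1))).erase j := by
            intro j' hj'
            simp only [Finset.mem_filter, Finset.mem_Icc] at hj'
            obtain ⟨⟨h1, h2⟩, hj'N, hv, hd⟩ := hj'
            have hjj' : j < j' := by
              rcases Nat.lt_or_ge j' j with hlt | hge
              · exfalso
                have := rowMono hαfull le_rfl (by omega) (le_of_lt hlt) hjN
                omega
              · rcases Nat.eq_or_lt_of_le hge with heq | hlt
                · exfalso; rw [← heq] at hv; omega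
                · exact hlt
            rw [Finset.mem_erase]
            refine ⟨by omega, ?_⟩
            simp only [Finset.mem_filter, Finset.mem_Icc]
            refine ⟨⟨by omega, hj'N⟩, ?_⟩
            rw [hβ1]
            omega
          have h1 := Finset.card_le_card hsubset
          rw [Finset.card_erase_of_mem hjS] at h1
          have h2 : 0 < ((Finset.Icc j (n-m)).filter
              (fun j' => β' (m+1) (j'-1) = β' (m+1) (j-1))).card :=
            Finset.card_pos.mpr ⟨j, hjS⟩
          omega
        rcases mkRow_spec (n := n) (m := m) (β := β') (e := e') hj1 hjN with
          ⟨hc, ht⟩ | ⟨hc, ht⟩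
        · rw [ht, hβ1]
          rw [he'v] at hc
          by_cases hv : α m j = α (m+1) (j-1)
          · exact hv.symm
          · exact absurd hc (by have := claimB hv; omega)
        · rw [ht, hβ1]
          rw [he'v] at hc
          by_cases hv : α m j = α (m+1) (j-1)
          · exact absurd (claimA hv) hc
          · omega
  · simp only [mkArr, if_neg h]
    rw [hβrow i h]

lemma sum_EF (hm : 1 ≤ m) (hmn : m + 1 ≤ n) (hβ : IsTSfrom n (m+1) β) :
    ∑ e ∈ EF n m β, ∏ k ∈ Finset.Icc 1 n, (Cik n β (m+1) k).choose (e k)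
      = 2 ^ (n - m) := by
  have hsum : ∑ k ∈ Finset.Icc 1 n, Cik n β (m+1) k = n - m := by
    have hf : ∀ j ∈ (Finset.range (n+1)).filter (fun j => j ≤ n - (m+1)),
        β (m+1) j ∈ Finset.Icc 1 n := by
      intro j hj
      simp only [Finset.mem_filter, Finset.mem_range] at hj
      have := hβ.2.2.1 (m+1) j le_rfl hmn hj.2
      rw [Finset.mem_Icc]
      omega
    have hcard := Finset.card_eq_sum_card_fiberwise hf
    have hs : ((Finset.range (n+1)).filter (fun j => j ≤ n - (m+1))).card = n - m := by
      have heq : (Finset.range (n+1)).filter (fun j => j ≤ n - (m+1))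
          = Finset.range (n - m) := by
        ext x
        simp only [Finset.mem_filter, Finset.mem_range]
        omega
      rw [heq, Finset.card_range]
    rw [← hs, hcard]
    apply Finset.sum_congr rfl
    intro k _
    unfold Cik
    rw [Finset.filter_filter]
  unfold EF
  rw [Finset.sum_image (by
    intro p hp q hq hpq
    funext k hk
    have h1 := congrFun hpq k
    simpa only [dif_pos hk] using h1)]
  have hprod : ∀ p ∈ (Finset.Icc 1 n).pi
      (fun k => Finset.range (Cik n β (m+1) k + 1)),
      (∏ k ∈ Finset.Icc 1 n, (Cik n β (m+1) k).choose
        ((fun k => if h : k ∈ Finset.Icc 1 n then p k h else 0) k))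
      = ∏ x ∈ (Finset.Icc 1 n).attach, (Cik n β (m+1) x.1).choose (p x.1 x.2) := by
    intro p _
    rw [← Finset.prod_attach (Finset.Icc 1 n)
      (fun k => (Cik n β (m+1) k).choose
        (if h : k ∈ Finset.Icc 1 n then p k h else 0))]
    apply Finset.prod_congr rfl
    intro x _
    congr 1
    exact dif_pos x.2
  rw [Finset.sum_congr rfl hprod, ← Finset.prod_sum (Finset.Icc 1 n)
    (fun k => Finset.range (Cik n β (m+1) k + 1))
    (fun k v => (Cik n β (m+1) k).choose v)]
  have h2 : ∀ k ∈ Finset.Icc 1 n,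
      (∑ v ∈ Finset.range (Cik n β (m+1) k + 1), (Cik n β (m+1) k).choose v)
        = 2 ^ (Cik n β (m+1) k) := fun k _ => Nat.sum_range_choose _
  rw [Finset.prod_congr rfl h2, Finset.prod_pow_eq_pow_sum, hsum]

end Step

lemma TSF_mem {n : ℕ} (hn : 1 ≤ n) :
    ∀ d, d ≤ n - 1 → ∀ α, (α ∈ TSF n d ↔ IsTSfrom n (n - d) α) := by
  intro d
  induction d with
  | zero =>
    intro _ α
    simp only [TSF, Finset.mem_singleton, Nat.sub_zero]
    constructor
    · rintro rfl
      refine ⟨?_, ?_, ?_, ?_, ?_⟩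
      · intro i j hij
        unfold baseArr
        rw [if_neg (by omega)]
      · intro i him hin
        unfold baseArr
        rw [if_pos (⟨by omega, rfl⟩ : i = n ∧ (0:ℕ) = 0)]
        omega
      · intro i j him hin hj
        have h1 : i = n := by omega
        have h2 : j = 0 := by omega
        subst h1; subst h2
        unfold baseArr
        rw [if_pos ⟨rfl, rfl⟩]
        omega
      · intro i j him hin hj
        exact absurd hj (by omega)
      · intro i j him hin hj1 hjN
        exact absurd hin (by omega)
    · intro hα
      funext i j
      unfold baseArr
      by_cases h : i = n ∧ j = 0
      · obtain ⟨rfl, rfl⟩ := h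
        rw [if_pos ⟨rfl, rfl⟩]
        exact hα.2.1 i le_rfl le_rfl
      · rw [if_neg h]
        exact hα.1 i j (by omega)
  | succ d ih =>
    intro hd α
    have hm1 : 1 ≤ n - (d+1) := by omega
    have hmn : (n - (d+1)) + 1 ≤ n := by omega
    have hnd : n - d = n - (d+1) + 1 := by omega
    constructor
    · intro hα
      simp only [TSF, Finset.mem_biUnion, Finset.mem_image] at hα
      obtain ⟨β, hβ, e, he, rfl⟩ := hα
      have hβTS : IsTSfrom n (n - d) β := (ih (by omega) β).mp hβ
      rw [hnd] at hβTS
      exact mkArr_isTS hm1 hmn hβTS he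
    · intro hα
      obtain ⟨β', e', hβ'TS, he'mem, heq⟩ := mkArr_surj hm1 hmn hα
      simp only [TSF, Finset.mem_biUnion, Finset.mem_image]
      refine ⟨β', ?_, e', he'mem, heq⟩
      rw [ih (by omega) β', hnd]
      exact hβ'TS

lemma TSF_sum {n : ℕ} (hn : 1 ≤ n) :
    ∀ d, d ≤ n - 1 →
      ∑ α ∈ TSF n d, ∏ i ∈ Finset.Icc (n - d) (n - 1), ∏ k ∈ Finset.Icc 1 n,
          Nat.choose (Cik n α (i + 1) k) (Eik n α i k)
        = 2 ^ (∑ i ∈ Finset.Icc (n - d) (n - 1), (n - i)) := by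
  intro d
  induction d with
  | zero =>
    intro _
    have hempty : Finset.Icc (n - 0) (n - 1) = ∅ := Finset.Icc_eq_empty (by omega)
    rw [hempty]
    simp [TSF]
  | succ d ih =>
    intro hd
    set m := n - (d+1) with hmdef
    have hm1 : 1 ≤ m := by omega
    have hmn : m + 1 ≤ n := by omega
    have hnd : n - d = m + 1 := by omega
    have hmemTS : ∀ β ∈ TSF n d, IsTSfrom n (m+1) β := by
      intro β hβ
      have := (TSF_mem hn d (by omega) β).mp hβ
      rwa [hnd] at this
    have hrow0 : ∀ β ∈ TSF n d, ∀ j, β m j = 0 := by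
      intro β hβ j
      exact (hmemTS β hβ).1 m j (by omega)
    have hicc : Finset.Icc m (n-1) = insert m (Finset.Icc (m+1) (n-1)) := by
      ext x
      simp only [Finset.mem_Icc, Finset.mem_insert]
      omega
    have hmnotin : m ∉ Finset.Icc (m+1) (n-1) := by
      rw [Finset.mem_Icc]; omega
    have hdisj : (↑(TSF n d) : Set (ℕ → ℕ → ℕ)).PairwiseDisjoint
        (fun β => (EF n m β).image (fun e => mkArr n m β e)) := by
      intro β₁ h₁ β₂ h₂ hne
      apply Finset.disjoint_left.mpr
      intro a ha1 ha2
      simp only [Finset.mem_image] at ha1 ha2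
      obtain ⟨e₁, he₁, rfl⟩ := ha1
      obtain ⟨e₂, he₂, heq⟩ := ha2
      apply hne
      funext i j
      by_cases h : i = m
      · rw [h, hrow0 β₁ (by exact_mod_cast h₁) j, hrow0 β₂ (by exact_mod_cast h₂) j]
      · have hr1 : mkArr n m β₁ e₁ i = β₁ i := mkArr_apply_ne h
        have hr2 : mkArr n m β₂ e₂ i = β₂ i := mkArr_apply_ne h
        rw [← hr1, ← hr2, heq]
    have hinner : ∀ β ∈ TSF n d,
        ∑ a ∈ (EF n m β).image (fun e => mkArr n m β e),
          ∏ i ∈ Finset.Icc m (n-1), ∏ k ∈ Finset.Icc 1 n,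
            (Cik n a (i+1) k).choose (Eik n a i k)
        = 2 ^ (n - m) * ∏ i ∈ Finset.Icc (m+1) (n-1), ∏ k ∈ Finset.Icc 1 n,
            (Cik n β (i+1) k).choose (Eik n β i k) := by
      intro β hβ
      have hβTS := hmemTS β hβ
      rw [Finset.sum_image (by
        intro e₁ h₁ e₂ h₂ heq
        funext k
        by_cases hk : k ∈ Finset.Icc 1 n
        · rw [← Eik_mkArr hm1 hmn hβTS h₁ hk, show mkArr n m β e₁ = mkArr n m β e₂ from heq, Eik_mkArr hm1 hmn hβTS h₂ hk]
        · rw [((mem_EF_iff.mp h₁) k).2 hk, ((mem_EF_iff.mp h₂) k).2 hk])]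
      have hW : ∀ e ∈ EF n m β,
          ∏ i ∈ Finset.Icc m (n-1), ∏ k ∈ Finset.Icc 1 n,
            (Cik n (mkArr n m β e) (i+1) k).choose (Eik n (mkArr n m β e) i k)
          = (∏ k ∈ Finset.Icc 1 n, (Cik n β (m+1) k).choose (e k))
            * ∏ i ∈ Finset.Icc (m+1) (n-1), ∏ k ∈ Finset.Icc 1 n,
              (Cik n β (i+1) k).choose (Eik n β i k) := by
        intro e he
        rw [hicc, Finset.prod_insert hmnotin]
        congr 1
        · apply Finset.prod_congr rfl
          intro k hk
          rw [Eik_mkArr hm1 hmn hβTS he hk,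
              Cik_row_eq (mkArr_apply_ne (by omega : m + 1 ≠ m))]
        · apply Finset.prod_congr rfl
          intro i hi
          rw [Finset.mem_Icc] at hi
          apply Finset.prod_congr rfl
          intro k hk
          rw [Cik_row_eq (mkArr_apply_ne (by omega : i + 1 ≠ m)),
              Eik_row_eq (mkArr_apply_ne (by omega : i ≠ m))
                (mkArr_apply_ne (by omega : i + 1 ≠ m))]
      rw [Finset.sum_congr rfl hW, ← Finset.sum_mul, sum_EF hm1 hmn hβTS]
    calc ∑ α ∈ TSF n (d+1), ∏ i ∈ Finset.Icc m (n-1), ∏ k ∈ Finset.Icc 1 n,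
          (Cik n α (i+1) k).choose (Eik n α i k)
        = ∑ β ∈ TSF n d, ∑ a ∈ (EF n m β).image (fun e => mkArr n m β e),
            ∏ i ∈ Finset.Icc m (n-1), ∏ k ∈ Finset.Icc 1 n,
              (Cik n a (i+1) k).choose (Eik n a i k) := by
          rw [show TSF n (d+1) = (TSF n d).biUnion
            (fun β => (EF n m β).image (fun e => mkArr n m β e)) from rfl]
          exact Finset.sum_biUnion hdisj
      _ = ∑ β ∈ TSF n d, 2 ^ (n - m) * ∏ i ∈ Finset.Icc (m+1) (n-1),
            ∏ k ∈ Finset.Icc 1 n, (Cik n β (i+1) k).choose (Eik n β i k) :=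
          Finset.sum_congr rfl hinner
      _ = 2 ^ (n - m) * ∑ β ∈ TSF n d, ∏ i ∈ Finset.Icc (m+1) (n-1),
            ∏ k ∈ Finset.Icc 1 n, (Cik n β (i+1) k).choose (Eik n β i k) :=
          (Finset.mul_sum _ _ _).symm
      _ = 2 ^ (n - m) * 2 ^ (∑ i ∈ Finset.Icc (m+1) (n-1), (n - i)) := by
          have hih := ih (by omega)
          rw [hnd] at hih
          rw [hih]
      _ = 2 ^ (∑ i ∈ Finset.Icc m (n-1), (n - i)) := by
          rw [hicc, Finset.sum_insert hmnotin, pow_add]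

end TS17

/-- The 2-enumeration identity over TSSCPP arrays:
`2^(binomial(n,2)) = Σ_{α ∈ TS_n} ∏_{i=1}^{n-1} ∏_{k=1}^{n}
binomial(C_{i+1,k}(α), E_{i,k}(α))`. -/
theorem stmt17 (n : ℕ) (hn : 1 ≤ n) :
    2 ^ (n.choose 2) =
      ∑ᶠ α ∈ {α : ℕ → ℕ → ℕ | IsTSarr n α},
        ∏ i ∈ Finset.Icc 1 (n - 1), ∏ k ∈ Finset.Icc 1 n,
          Nat.choose (Cik n α (i + 1) k) (Eik n α i k) := by
  have hset : {α : ℕ → ℕ → ℕ | IsTSarr n α} = ↑(TS17.TSF n (n-1)) := by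
    ext α
    rw [Finset.mem_coe, TS17.TSF_mem hn (n-1) le_rfl]
    have h1 : n - (n-1) = 1 := by omega
    rw [h1]
    exact Iff.rfl
  rw [hset, finsum_mem_coe_finset]
  have := TS17.TSF_sum hn (n-1) le_rfl
  have h1 : n - (n-1) = 1 := by omega
  rw [h1] at this
  rw [this]
  congr 1
  have h2 : ∑ i ∈ Finset.Icc 1 (n-1), (n - i) = ∑ i ∈ Finset.Icc 1 (n-1), i := by
    apply Finset.sum_nbij' (fun i => n - i) (fun i => n - i)
    · intro a ha; rw [Finset.mem_Icc] at ha ⊢; omega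
    · intro a ha; rw [Finset.mem_Icc] at ha ⊢; omega
    · intro a ha; rw [Finset.mem_Icc] at ha; omega
    · intro a ha; rw [Finset.mem_Icc] at ha; omega
    · intro a ha; rfl
  rw [h2]
  have h3 : ∑ i ∈ Finset.Icc 1 (n-1), i = ∑ i ∈ Finset.range n, i := by
    rw [Finset.range_eq_Ico]
    rw [← Finset.Ico_add_one_right_eq_Icc]
    have : Finset.Ico 0 n = insert 0 (Finset.Ico 1 n) := by
      ext x; simp [Finset.mem_Ico, Finset.mem_insert]; omega
    rw [this, Finset.sum_insert (by simp)]
    rw [Finset.Ico_add_one_right_eq_Icc]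
    have h4 : Finset.Icc 1 (n-1) = Finset.Ico 1 n := by
      ext x; rw [Finset.mem_Icc, Finset.mem_Ico]; omega
    rw [h4]
    omega
  rw [h3, Finset.sum_range_id, Nat.choose_two_right]
end
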